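/- arXiv:0910.5636 — 7 statements merged into one kernel-verified Lean document; each statement's English description precedes it below -/
import Mathlib

section
/- Under the hypotheses of the previous recurrence (w positive increasing, w(1)-w(0) = ((α k̃(0)+λ)/k(0)) w(0), and for r ≥ 1, w(r+1)-w(r) = ((α k̃(r)+λ)/k(r)) w(r) + (1/k(r))(w(r)-w(r-1)), with 0 < α = λ/(1+λ) < 1, λ > 0, k(r) ≥ 1), for all r ≥ 0 the increment satisfies ((α k̃(r) + λ)/k(r)) · w(r) ≤ w(r+1) - w(r) < ((α k̃(r) + λ + 1)/k(r)) · w(r). -/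
theorem stmt_3 (lam : ℝ) (hlam : 0 < lam) (k kt : ℕ → ℝ)
    (hk : ∀ r, 1 ≤ k r) (hkt : ∀ r, 0 ≤ kt r) (w : ℕ → ℝ)
    (hw : ∀ r, 0 < w r) (hmono : ∀ r, w r < w (r + 1))
    (h1 : w 1 - w 0 = (((lam / (1 + lam)) * kt 0 + lam) / k 0) * w 0)
    (hrec : ∀ r, 1 ≤ r → w (r + 1) - w r
      = (((lam / (1 + lam)) * kt r + lam) / k r) * w r
        + (1 / k r) * (w r - w (r - 1))) :
    ∀ r, (((lam / (1 + lam)) * kt r + lam) / k r) * w r ≤ w (r + 1) - w r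
      ∧ w (r + 1) - w r < (((lam / (1 + lam)) * kt r + lam + 1) / k r) * w r := by
  intro r
  have hkpos : (0:ℝ) < k r := lt_of_lt_of_le one_pos (hk r)
  have hwr := hw r
  match r with
  | 0 =>
    constructor
    · rw [← h1]
    · rw [h1]
      have : (((lam / (1 + lam)) * kt 0 + lam + 1) / k 0) * w 0
          = (((lam / (1 + lam)) * kt 0 + lam) / k 0) * w 0 + (1 / k 0) * w 0 := by
        field_simp
      rw [this]
      have : 0 < (1 / k 0) * w 0 := by positivity
      linarith
  | (n+1) =>
    have hr := hrec (n+1) (Nat.le_add_left 1 n)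
    simp only [Nat.add_sub_cancel] at hr
    have hprev : 0 ≤ w (n+1) - w n := le_of_lt (sub_pos.mpr (hmono n))
    have hlt : w (n+1) - w n < w (n+1) := by have := hw n; linarith
    constructor
    · rw [hr]
      have : 0 ≤ (1 / k (n+1)) * (w (n+1) - w n) := by positivity
      linarith
    · rw [hr]
      have heq : (((lam / (1 + lam)) * kt (n+1) + lam + 1) / k (n+1)) * w (n+1)
          = (((lam / (1 + lam)) * kt (n+1) + lam) / k (n+1)) * w (n+1)
            + (1 / k (n+1)) * w (n+1) := by
        field_simp
      rw [heq]
      have := (mul_lt_mul_iff_right₀ (by positivity : (0:ℝ) < 1 / k (n+1))).mpr hlt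
      linarith
end

section
/- Let λ > 0, α = λ/(1+λ), and k, k̃ : ℕ → ℝ with k(r) ≥ 1, k̃(r) ≥ 0. Let w satisfy w(0) > 0 and for all r: (1 + (α k̃(r) + λ)/k(r)) w(r) ≤ w(r+1) ≤ (1 + (α k̃(r) + λ + 1)/k(r)) w(r). Then w is bounded if and only if ∑_{r=0}^∞ (k̃(r) + 1)/k(r) < ∞. -/
theorem stmt_4 (lam : ℝ) (hlam : 0 < lam) (k kt : ℕ → ℝ)
    (hk : ∀ r, 1 ≤ k r) (hkt : ∀ r, 0 ≤ kt r) (w : ℕ → ℝ) (hw0 : 0 < w 0)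
    (hlow : ∀ r, (1 + ((lam / (1 + lam)) * kt r + lam) / k r) * w r ≤ w (r + 1))
    (hup : ∀ r, w (r + 1) ≤ (1 + ((lam / (1 + lam)) * kt r + lam + 1) / k r) * w r) :
    (∃ C : ℝ, ∀ r, w r ≤ C) ↔ Summable (fun r => (kt r + 1) / k r) := by
  set α : ℝ := lam / (1 + lam) with hαdef
  have hαpos : 0 < α := div_pos hlam (by linarith)
  have hα1 : α < 1 := (div_lt_one (by linarith)).2 (by linarith)
  have hkpos : ∀ r, 0 < k r := fun r => lt_of_lt_of_le one_pos (hk r)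
  set a : ℕ → ℝ := fun r => (α * kt r + lam) / k r with hadef
  set b : ℕ → ℝ := fun r => (α * kt r + lam + 1) / k r with hbdef
  have hanum : ∀ r, 0 ≤ α * kt r + lam := fun r =>
    add_nonneg (mul_nonneg hαpos.le (hkt r)) hlam.le
  have hapos : ∀ r, 0 ≤ a r := fun r => div_nonneg (hanum r) (hkpos r).le
  have hbpos : ∀ r, 0 ≤ b r := fun r => div_nonneg (by nlinarith [hanum r]) (hkpos r).le
  have hwpos : ∀ r, 0 < w r := by
    intro r
    induction r with
    | zero => exact hw0
    | succ n ih =>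
      have := hlow n
      nlinarith [hapos n]
  have hSnonneg : ∀ n, 0 ≤ ∑ i ∈ Finset.range n, a i :=
    fun n => Finset.sum_nonneg (fun i _ => hapos i)
  have hlower : ∀ n, w 0 * (1 + ∑ i ∈ Finset.range n, a i) ≤ w n := by
    intro n
    induction n with
    | zero => simp
    | succ n ih =>
      have h1 : (1 + a n) * w n ≤ w (n + 1) := hlow n
      have h2 := hapos n
      have h3 := hSnonneg n
      have h4 := hwpos n
      rw [Finset.sum_range_succ]
      nlinarith [mul_nonneg (mul_nonneg hw0.le h2) h3]
  constructor
  · rintro ⟨C, hC⟩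
    have hsa : Summable a := by
      apply summable_of_sum_range_le hapos (c := C / w 0 - 1)
      intro n
      have h1 := hlower n
      have h2 := hC n
      rw [le_sub_iff_add_le, le_div_iff₀ hw0]
      nlinarith
    set c : ℝ := min α lam with hcdef
    have hcpos : 0 < c := lt_min hαpos hlam
    apply Summable.of_nonneg_of_le
      (fun r => div_nonneg (by nlinarith [hkt r]) (hkpos r).le)
      (fun r => ?_) (hsa.div_const c)
    show (kt r + 1) / k r ≤ (α * kt r + lam) / k r / c
    rw [div_div, div_le_div_iff₀ (hkpos r) (mul_pos (hkpos r) hcpos)]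
    have h1 : c ≤ α := min_le_left _ _
    have h2 : c ≤ lam := min_le_right _ _
    have key : c * (kt r + 1) ≤ α * kt r + lam := by nlinarith [hkt r]
    nlinarith [mul_le_mul_of_nonneg_right key (hkpos r).le]
  · intro hsum
    have hsb : Summable b := by
      apply Summable.of_nonneg_of_le hbpos (fun r => ?_) (hsum.mul_left (lam + 1))
      show (α * kt r + lam + 1) / k r ≤ (lam + 1) * ((kt r + 1) / k r)
      rw [← mul_div_assoc]
      rw [div_le_div_iff_of_pos_right (hkpos r)]
      nlinarith [hkt r]
    set S : ℝ := ∑' r, b r with hSdef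
    have hpart : ∀ n, ∑ i ∈ Finset.range n, b i ≤ S :=
      fun n => Summable.sum_le_tsum _ (fun i _ => hbpos i) hsb
    refine ⟨w 0 * Real.exp S, fun n => ?_⟩
    have key : ∀ n, w n ≤ w 0 * Real.exp (∑ i ∈ Finset.range n, b i) := by
      intro n
      induction n with
      | zero => simp
      | succ n ih =>
        have h1 := hup n
        have h2 : (1 : ℝ) + b n ≤ Real.exp (b n) := by linarith [Real.add_one_le_exp (b n)]
        have h3 := hwpos n
        calc w (n + 1) ≤ (1 + b n) * w n := h1
          _ ≤ Real.exp (b n) * w n := by nlinarith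
          _ ≤ Real.exp (b n) * (w 0 * Real.exp (∑ i ∈ Finset.range n, b i)) := by
              have := Real.exp_pos (b n); nlinarith
          _ = w 0 * Real.exp (∑ i ∈ Finset.range (n + 1), b i) := by
              rw [Finset.sum_range_succ, Real.exp_add]; ring
    calc w n ≤ w 0 * Real.exp (∑ i ∈ Finset.range n, b i) := key n
      _ ≤ w 0 * Real.exp S := by
          have := Real.exp_le_exp.2 (hpart n)
          nlinarith [Real.exp_pos (∑ i ∈ Finset.range n, b i)]
end

section
/- Let λ > 0, k₊, S : ℕ → ℝ positive, V(r) = ∑_{i=0}^r S(i), and let w : ℕ → ℝ with w(0) > 0 satisfy w(r+1) - w(r) = (λ/(k₊(r)S(r))) ∑_{i=0}^r S(i)w(i). Then w is bounded if and only if ∑_{r=0}^∞ V(r)/(k₊(r)S(r)) < ∞. -/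
theorem stmt_7 (lam : ℝ) (hlam : 0 < lam) (kp S : ℕ → ℝ)
    (hkp : ∀ r, 0 < kp r) (hS : ∀ r, 0 < S r)
    (w : ℕ → ℝ) (hw0 : 0 < w 0)
    (hrec : ∀ r, w (r + 1) - w r
      = (lam / (kp r * S r)) * ∑ i ∈ Finset.range (r + 1), S i * w i) :
    (∃ C : ℝ, ∀ r, w r ≤ C) ↔
      Summable (fun r => (∑ i ∈ Finset.range (r + 1), S i) / (kp r * S r)) := by
  set a : ℕ → ℝ := fun r => (∑ i ∈ Finset.range (r + 1), S i) / (kp r * S r) with ha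
  have hkS : ∀ r, 0 < kp r * S r := fun r => mul_pos (hkp r) (hS r)
  have hV : ∀ r, 0 < ∑ i ∈ Finset.range (r + 1), S i := fun r =>
    Finset.sum_pos (fun i _ => hS i) (Finset.nonempty_range_iff.mpr (Nat.succ_ne_zero r))
  have hapos : ∀ r, 0 < a r := fun r => div_pos (hV r) (hkS r)
  have hwpos : ∀ r, 0 < w r := by
    intro r
    induction r using Nat.strong_induction_on with
    | _ r ih =>
      cases r with
      | zero => exact hw0
      | succ n =>
        have h := hrec n
        have hsum : 0 < ∑ i ∈ Finset.range (n + 1), S i * w i :=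
          Finset.sum_pos (fun i hi => mul_pos (hS i) (ih i (Finset.mem_range.mp hi)))
            ⟨0, Finset.mem_range.mpr (Nat.succ_pos n)⟩
        have h2 := mul_pos (div_pos hlam (hkS n)) hsum
        have := ih n (Nat.lt_succ_self n)
        linarith
  have hmono : Monotone w := by
    apply monotone_nat_of_le_succ
    intro n
    have h := hrec n
    have hsum : 0 < ∑ i ∈ Finset.range (n + 1), S i * w i :=
      Finset.sum_pos (fun i _ => mul_pos (hS i) (hwpos i))
        ⟨0, Finset.mem_range.mpr (Nat.succ_pos n)⟩
    have h2 := mul_pos (div_pos hlam (hkS n)) hsum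
    linarith
  constructor
  · rintro ⟨C, hC⟩
    have key : ∀ r, lam * w 0 * a r ≤ w (r + 1) - w r := by
      intro r
      rw [hrec r]
      have h1 : (∑ i ∈ Finset.range (r + 1), S i) * w 0
          ≤ ∑ i ∈ Finset.range (r + 1), S i * w i := by
        rw [Finset.sum_mul]
        exact Finset.sum_le_sum fun i _ =>
          mul_le_mul_of_nonneg_left (hmono (Nat.zero_le i)) (hS i).le
      calc lam * w 0 * a r
          = (lam / (kp r * S r)) * ((∑ i ∈ Finset.range (r + 1), S i) * w 0) := by
            rw [ha]; field_simp
        _ ≤ _ := mul_le_mul_of_nonneg_left h1 (div_pos hlam (hkS r)).le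
    have hsummul : Summable (fun r => lam * w 0 * a r) := by
      apply summable_of_sum_range_le (c := C - w 0)
        (fun r => (mul_pos (mul_pos hlam hw0) (hapos r)).le)
      intro n
      calc ∑ i ∈ Finset.range n, lam * w 0 * a i
          ≤ ∑ i ∈ Finset.range n, (w (i + 1) - w i) :=
            Finset.sum_le_sum fun i _ => key i
        _ = w n - w 0 := Finset.sum_range_sub w n
        _ ≤ C - w 0 := by linarith [hC n]
    have hne : lam * w 0 ≠ 0 := (mul_pos hlam hw0).ne'
    have h2 := hsummul.mul_left ((lam * w 0)⁻¹)
    have heq : (fun r => (lam * w 0)⁻¹ * (lam * w 0 * a r)) = a := by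
      funext r; rw [← mul_assoc, inv_mul_cancel₀ hne, one_mul]
    rwa [heq] at h2
  · intro hsum
    have hT : ∀ r, ∑ i ∈ Finset.range r, a i ≤ ∑' i, a i :=
      fun r => Summable.sum_le_tsum _ (fun i _ => (hapos i).le) hsum
    refine ⟨w 0 * Real.exp (lam * ∑' i, a i), ?_⟩
    have key : ∀ r, w r ≤ w 0 * Real.exp (lam * ∑ i ∈ Finset.range r, a i) := by
      intro r
      induction r with
      | zero => simp
      | succ n ih =>
        have h1 : w (n + 1) ≤ w n * (1 + lam * a n) := by
          have hrc := hrec n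
          have h2 : ∑ i ∈ Finset.range (n + 1), S i * w i
              ≤ (∑ i ∈ Finset.range (n + 1), S i) * w n := by
            rw [Finset.sum_mul]
            exact Finset.sum_le_sum fun i hi =>
              mul_le_mul_of_nonneg_left
                (hmono (Nat.lt_succ_iff.mp (Finset.mem_range.mp hi))) (hS i).le
          have h3 : (lam / (kp n * S n)) * ∑ i ∈ Finset.range (n + 1), S i * w i
              ≤ lam * a n * w n := by
            calc _ ≤ (lam / (kp n * S n)) * ((∑ i ∈ Finset.range (n + 1), S i) * w n) :=
                  mul_le_mul_of_nonneg_left h2 (div_pos hlam (hkS n)).le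
              _ = lam * a n * w n := by rw [ha]; field_simp
          nlinarith
        have h4 : w n * (1 + lam * a n) ≤ w n * Real.exp (lam * a n) := by
          apply mul_le_mul_of_nonneg_left _ (hwpos n).le
          have := Real.add_one_le_exp (lam * a n)
          linarith
        calc w (n + 1) ≤ w n * Real.exp (lam * a n) := le_trans h1 h4
          _ ≤ (w 0 * Real.exp (lam * ∑ i ∈ Finset.range n, a i)) * Real.exp (lam * a n) :=
              mul_le_mul_of_nonneg_right ih (Real.exp_pos _).le
          _ = w 0 * Real.exp (lam * ∑ i ∈ Finset.range (n + 1), a i) := by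
              rw [mul_assoc, ← Real.exp_add, Finset.sum_range_succ, mul_add]
    intro r
    calc w r ≤ w 0 * Real.exp (lam * ∑ i ∈ Finset.range r, a i) := key r
      _ ≤ w 0 * Real.exp (lam * ∑' i, a i) :=
          mul_le_mul_of_nonneg_left
            (Real.exp_le_exp.mpr (mul_le_mul_of_nonneg_left (hT r) hlam.le)) hw0.le
end

section
/- Let S : ℕ → ℝ be defined by S(r) = ((r!))², set V(r) = ∑_{i=0}^r S(i). Then ∑_{r=0}^∞ V(r)/S(r+1) < ∞. -/
theorem stmt_8 (S : ℕ → ℝ) (hS : ∀ r, S r = ((Nat.factorial r : ℝ)) ^ 2) :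
    Summable (fun r => (∑ i ∈ Finset.range (r + 1), S i) / S (r + 1)) := by
  have hSpos : ∀ r, 0 < S r := by
    intro r; rw [hS]; positivity
  have hV : ∀ r, (∑ i ∈ Finset.range (r + 1), S i) ≤ 2 * S r := by
    intro r
    induction r with
    | zero => norm_num [hS, Nat.factorial]
    | succ n ih =>
      rw [Finset.sum_range_succ]
      have key : 2 * S n ≤ S (n + 1) ∨ n = 0 := by
        rcases Nat.eq_zero_or_pos n with h | h
        · right; exact h
        · left
          rw [hS, hS, Nat.factorial_succ]
          push_cast
          have h1 : (1:ℝ) ≤ (n.factorial:ℝ)^2 := by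
            have := Nat.one_le_iff_ne_zero.mpr (Nat.factorial_ne_zero n)
            have : (1:ℝ) ≤ (n.factorial:ℝ) := by exact_mod_cast this
            nlinarith
          have h2 : (2:ℝ) ≤ (n:ℝ) + 1 := by
            have : (1:ℝ) ≤ (n:ℝ) := by exact_mod_cast h
            linarith
          rw [mul_pow]; nlinarith [sq_nonneg ((n:ℝ)-1)]
      rcases key with h | h
      · linarith
      · subst h
        norm_num [hS, Nat.factorial]
  have hsum : Summable (fun n : ℕ => 2 / ((n:ℝ) + 1) ^ 2) := by
    have h := (summable_nat_add_iff 1).mpr (Real.summable_one_div_nat_pow.mpr (by norm_num : 1 < 2))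
    simpa [div_eq_mul_inv, mul_comm] using h.mul_left 2
  refine Summable.of_nonneg_of_le
    (fun r => div_nonneg (Finset.sum_nonneg fun i _ => (hSpos i).le) (hSpos _).le)
    (fun r => ?_) hsum
  have h1 : (∑ i ∈ Finset.range (r + 1), S i) / S (r + 1) ≤ 2 * S r / S (r + 1) := by
    gcongr
    · exact (hSpos _).le
    · exact hV r
  refine h1.trans ?_
  have heq : S (r + 1) = ((r:ℝ) + 1) ^ 2 * S r := by
    rw [hS, hS, Nat.factorial_succ]; push_cast; ring
  rw [heq, mul_comm ((((r:ℝ)+1))^2) (S r), mul_comm 2 (S r),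
    mul_div_mul_left _ _ (hSpos r).ne']
end

section
/- Let k : ℕ → ℝ with k(r) ≥ 1 for all r, define S(0) = 1 and S(r+1) = k(r)·S(r), and V(r) = ∑_{i=0}^r S(i). Then ∑_{r=0}^∞ V(r)/S(r+1) < ∞ if and only if ∑_{r=0}^∞ 1/k(r) < ∞. -/
theorem stmt_9 (k S : ℕ → ℝ) (hk : ∀ r, 1 ≤ k r)
    (hS0 : S 0 = 1) (hS : ∀ r, S (r + 1) = k r * S r) :
    Summable (fun r => (∑ i ∈ Finset.range (r + 1), S i) / S (r + 1)) ↔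
      Summable (fun r => 1 / k r) := by
  have hk0 : ∀ r, 0 < k r := fun r => lt_of_lt_of_le one_pos (hk r)
  have hSpos : ∀ r, 0 < S r := by
    intro r
    induction r with
    | zero => rw [hS0]; exact one_pos
    | succ n ih => rw [hS]; exact mul_pos (hk0 n) ih
  set V : ℕ → ℝ := fun r => ∑ i ∈ Finset.range (r + 1), S i with hV
  have hVpos : ∀ r, 0 < V r :=
    fun r => Finset.sum_pos (fun i _ => hSpos i) ⟨0, by simp⟩
  have hSleV : ∀ r, S r ≤ V r := fun r =>
    Finset.single_le_sum (fun i _ => (hSpos i).le)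
      (by simp : r ∈ Finset.range (r + 1))
  constructor
  · intro h
    refine Summable.of_nonneg_of_le
      (fun r => div_nonneg zero_le_one (hk0 r).le) (fun r => ?_) h
    have h1 : 1 / k r = S r / S (r + 1) := by
      rw [hS, mul_comm, div_mul_eq_div_div, div_self (hSpos r).ne']
    rw [h1]
    exact (div_le_div_iff_of_pos_right (hSpos (r + 1))).2 (hSleV r)
  · intro h
    set T : ℕ → ℝ := fun r => V r / S r with hT
    have hTnonneg : ∀ r, 0 ≤ T r := fun r => div_nonneg (hVpos r).le (hSpos r).le
    have hTrec : ∀ r, T (r + 1) = 1 + T r * (1 / k r) := by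
      intro r
      have h1 : V (r + 1) = V r + S (r + 1) := Finset.sum_range_succ _ _
      simp only [hT]
      rw [h1, hS]
      have hkne := (hk0 r).ne'
      have hSne := (hSpos r).ne'
      field_simp
      ring
    have hb : ∀ r, V r / S (r + 1) = T r * (1 / k r) := by
      intro r
      rw [hS, mul_comm, div_mul_eq_div_div, div_eq_mul_one_div]
    -- eventually 1/k r ≤ 1/2
    obtain ⟨N, hN⟩ := Filter.eventually_atTop.1
      (h.tendsto_atTop_zero.eventually (eventually_le_nhds one_half_pos))
    set M : ℝ := max 2 ((Finset.range (N + 1)).sup' ⟨0, by simp⟩ T) with hM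
    have hM2 : (2 : ℝ) ≤ M := le_max_left _ _
    have hTM : ∀ r, T r ≤ M := by
      intro r
      induction r with
      | zero =>
          exact le_trans (Finset.le_sup' T (by simp : 0 ∈ Finset.range (N + 1)))
            (le_max_right _ _)
      | succ n ih =>
          by_cases hn : n + 1 ≤ N
          · exact le_trans
              (Finset.le_sup' T (Finset.mem_range.2 (by omega) : n + 1 ∈ Finset.range (N + 1)))
              (le_max_right _ _)
          · have hnN : N ≤ n := by omega
            have hkn : 1 / k n ≤ 1 / 2 := hN n hnN
            have : T n * (1 / k n) ≤ M * (1 / 2) :=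
              mul_le_mul ih hkn (div_nonneg zero_le_one (hk0 n).le) (le_trans (by norm_num) hM2)
            calc T (n + 1) = 1 + T n * (1 / k n) := hTrec n
              _ ≤ 1 + M * (1 / 2) := by linarith
              _ ≤ M := by linarith
    refine Summable.of_nonneg_of_le
      (fun r => div_nonneg (hVpos r).le (hSpos (r + 1)).le)
      (fun r => ?_) (h.mul_left M)
    rw [hb r]
    exact mul_le_mul_of_nonneg_right (hTM r) (div_nonneg zero_le_one (hk0 r).le)
end

section
/- Let λ > 0 and a : ℕ → ℝ with a(r) > 0, and let v : ℕ → ℝ with v(0) > 0 satisfy a(0)(v(0) - v(1)) + λ v(0) = 0 and, for r ≥ 1, a(r)(v(r) - v(r+1)) + a(r-1)(v(r) - v(r-1)) + λ v(r) = 0. Then for all r ≥ 0, v(r+1) - v(r) = (λ/a(r)) ∑_{i=0}^r v(i); moreover v is bounded if and only if ∑_{r=0}^∞ r/a(r) < ∞. -/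
theorem stmt_13 (lam : ℝ) (hlam : 0 < lam) (a : ℕ → ℝ) (ha : ∀ r, 0 < a r)
    (v : ℕ → ℝ) (hv0 : 0 < v 0)
    (h0 : a 0 * (v 0 - v 1) + lam * v 0 = 0)
    (hrec : ∀ r, 1 ≤ r →
      a r * (v r - v (r + 1)) + a (r - 1) * (v r - v (r - 1)) + lam * v r = 0) :
    (∀ r, v (r + 1) - v r = (lam / a r) * ∑ i ∈ Finset.range (r + 1), v i) ∧
    ((∃ C : ℝ, ∀ r, v r ≤ C) ↔ Summable (fun r : ℕ => (r : ℝ) / a r)) := by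
  have hane : ∀ r, a r ≠ 0 := fun r => (ha r).ne'
  have part1 : ∀ r, v (r + 1) - v r = (lam / a r) * ∑ i ∈ Finset.range (r + 1), v i := by
    intro r
    induction r with
    | zero =>
      rw [Finset.sum_range_one, div_mul_eq_mul_div, eq_div_iff (hane 0)]
      linear_combination -h0
    | succ n ih =>
      have hn := hrec (n + 1) (by omega)
      simp only [Nat.add_sub_cancel] at hn
      have ih' := ih
      rw [div_mul_eq_mul_div, eq_div_iff (hane n)] at ih'
      have h1 : a n * (v (n + 1) - v n) = lam * ∑ i ∈ Finset.range (n + 1), v i := by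
        linear_combination ih'
      rw [Finset.sum_range_succ, div_mul_eq_mul_div, eq_div_iff (hane (n + 1))]
      linear_combination h1 - hn
  refine ⟨part1, ?_⟩
  have hpos : ∀ r, 0 < v r := by
    intro r
    induction r using Nat.strong_induction_on with
    | _ r ih =>
      match r with
      | 0 => exact hv0
      | (n + 1) =>
        have hS : 0 < ∑ i ∈ Finset.range (n + 1), v i :=
          Finset.sum_pos (fun i hi => ih i (by simp at hi; omega)) (by simp)
        have h := part1 n
        have := mul_pos (div_pos hlam (ha n)) hS
        linarith [ih n (by omega)]
  have hmono : Monotone v := by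
    apply monotone_nat_of_le_succ
    intro n
    have hS : 0 ≤ ∑ i ∈ Finset.range (n + 1), v i :=
      Finset.sum_nonneg (fun i _ => (hpos i).le)
    have h := part1 n
    nlinarith [mul_nonneg (div_pos hlam (ha n)).le hS]
  have hSlow : ∀ r : ℕ, ((r : ℝ) + 1) * v 0 ≤ ∑ i ∈ Finset.range (r + 1), v i := by
    intro r
    have := Finset.card_nsmul_le_sum (Finset.range (r + 1)) v (v 0)
      (fun i _ => hmono (Nat.zero_le i))
    simpa [Finset.card_range, nsmul_eq_mul, add_comm] using this
  have hSup : ∀ r : ℕ, ∑ i ∈ Finset.range (r + 1), v i ≤ ((r : ℝ) + 1) * v r := by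
    intro r
    have := Finset.sum_le_card_nsmul (Finset.range (r + 1)) v (v r)
      (fun i hi => hmono (by simpa using Nat.lt_succ_iff.mp (Finset.mem_range.mp hi)))
    simpa [Finset.card_range, nsmul_eq_mul, add_comm] using this
  set g : ℕ → ℝ := fun r => ((r : ℝ) + 1) / a r with hg
  have hgnonneg : ∀ r, 0 ≤ g r := fun r =>
    div_nonneg (by positivity) (ha r).le
  have htel : ∀ n : ℕ, v n = v 0 + ∑ k ∈ Finset.range n, (lam / a k) * ∑ i ∈ Finset.range (k + 1), v i := by
    intro n
    have h2 : ∑ k ∈ Finset.range n, (lam / a k) * ∑ i ∈ Finset.range (k + 1), v i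
        = v n - v 0 := by
      rw [← Finset.sum_range_sub v n]
      exact Finset.sum_congr rfl (fun k _ => (part1 k).symm)
    linarith
  constructor
  · rintro ⟨C, hC⟩
    -- partial sums of g are bounded
    have hgsum : Summable g := by
      apply summable_of_sum_range_le hgnonneg (c := (C - v 0) / (lam * v 0))
      intro n
      have hb : v 0 + lam * v 0 * ∑ k ∈ Finset.range n, g k ≤ C := by
        have h1 : ∀ k ∈ Finset.range n, lam * v 0 * g k ≤ (lam / a k) * ∑ i ∈ Finset.range (k + 1), v i := by
          intro k _
          have h2 : lam * v 0 * g k = (lam / a k) * (((k : ℝ) + 1) * v 0) := by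
            simp only [hg]
            field_simp
          rw [h2]
          exact mul_le_mul_of_nonneg_left (hSlow k) (div_pos hlam (ha k)).le
        have h3 := Finset.sum_le_sum h1
        rw [← Finset.mul_sum] at h3
        have h4 := htel n
        have := hC n
        linarith
      rw [le_div_iff₀ (by positivity)]
      nlinarith [Finset.sum_nonneg (fun k (_ : k ∈ Finset.range n) => hgnonneg k)]
    -- compare r/a r ≤ g r
    apply Summable.of_nonneg_of_le (fun r => div_nonneg (Nat.cast_nonneg r) (ha r).le)
      (fun r => ?_) hgsum
    simp only [hg]
    exact (div_le_div_iff_of_pos_right (ha r)).mpr (by linarith)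
  · intro hsum
    -- Summable g
    have h1a : Summable (fun n : ℕ => (1 : ℝ) / a (n + 1)) := by
      apply Summable.of_nonneg_of_le (fun n => div_nonneg zero_le_one (ha _).le)
        (fun n => ?_) ((summable_nat_add_iff 1).mpr hsum)
      have h5 : (1 : ℝ) ≤ ((n + 1 : ℕ) : ℝ) := by
        exact_mod_cast Nat.one_le_iff_ne_zero.mpr (by omega)
      exact (div_le_div_iff_of_pos_right (ha (n + 1))).mpr h5
    have h1 : Summable (fun r : ℕ => (1 : ℝ) / a r) := (summable_nat_add_iff 1).mp h1a
    have hgsum : Summable g := by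
      have : g = fun r : ℕ => (r : ℝ) / a r + 1 / a r := by
        funext r
        show ((r : ℝ) + 1) / a r = _
        rw [add_div]
      rw [this]
      exact hsum.add h1
    set T := ∑' k, g k with hT
    have hTnonneg : 0 ≤ T := tsum_nonneg hgnonneg
    refine ⟨v 0 * Real.exp (lam * T), fun n => ?_⟩
    have key : ∀ n : ℕ, v n ≤ v 0 * Real.exp (∑ k ∈ Finset.range n, lam * g k) := by
      intro n
      induction n with
      | zero => simp
      | succ m ih =>
        have h := part1 m
        have hub : v (m + 1) ≤ v m * (1 + lam * g m) := by
          have h2 : (lam / a m) * ∑ i ∈ Finset.range (m + 1), v i ≤ (lam / a m) * (((m : ℝ) + 1) * v m) :=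
            mul_le_mul_of_nonneg_left (hSup m) (div_pos hlam (ha m)).le
          have h3 : (lam / a m) * (((m : ℝ) + 1) * v m) = v m * (lam * g m) := by
            field_simp [hg]; ring
          nlinarith
        have hexp : 1 + lam * g m ≤ Real.exp (lam * g m) := by
          have := Real.add_one_le_exp (lam * g m)
          linarith
        rw [Finset.sum_range_succ, Real.exp_add]
        calc v (m + 1) ≤ v m * (1 + lam * g m) := hub
          _ ≤ v m * Real.exp (lam * g m) :=
            mul_le_mul_of_nonneg_left hexp (hpos m).le
          _ ≤ (v 0 * Real.exp (∑ k ∈ Finset.range m, lam * g k)) * Real.exp (lam * g m) :=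
            mul_le_mul_of_nonneg_right ih (Real.exp_nonneg _)
          _ = v 0 * (Real.exp (∑ k ∈ Finset.range m, lam * g k) * Real.exp (lam * g m)) := by ring
    refine (key n).trans ?_
    apply mul_le_mul_of_nonneg_left _ hv0.le
    apply Real.exp_le_exp.mpr
    have : ∑ k ∈ Finset.range n, lam * g k = lam * ∑ k ∈ Finset.range n, g k := by
      rw [Finset.mul_sum]
    rw [this]
    exact mul_le_mul_of_nonneg_left (Summable.sum_le_tsum _ (fun k _ => hgnonneg k) hgsum) hlam.le
end

section
/- Let S : ℕ → ℝ with S(r) > 0, and define S̃(r) = S(r) + r·S(r-1) (with S(-1) = 0), V(r) = ∑_{i=0}^r S(i), Ṽ(r) = ∑_{i=0}^r S̃(i). If ∑_{r=0}^∞ V(r)/S(r+1) < ∞ and ∑_{r=1}^∞ r·V(r-1)/((r+1)·S(r)) < ∞, then ∑_{r=0}^∞ Ṽ(r)/S̃(r+1) < ∞. -/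
/-!
Write `V r = ∑_{i ≤ r} S i`. Since `S̃ (i + 1) = S (i + 1) + (i + 1) S i`, the partial sums split as
`Ṽ r = V r + ∑_{j < r} (j + 1) S j`, and the second sum is at most `r V (r - 1)`. Bounding
`S̃ (r + 1)` from below by each of its two summands separately gives
`Ṽ r / S̃ (r + 1) ≤ V r / S (r + 1) + r V (r - 1) / ((r + 1) S r)`, two summable series.
-/

open Finset

theorem add_div_add_le_div_add_div {K : Type*} [Field K] [LinearOrder K] [IsStrictOrderedRing K]
    {a b c d : K} (ha : 0 ≤ a) (hb : 0 ≤ b) (hc : 0 < c) (hd : 0 < d) :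
    (a + b) / (c + d) ≤ a / c + b / d := by
  rw [add_div]
  gcongr <;> linarith

theorem sum_range_weighted_le_mul_sum (S : ℕ → ℝ) (hS : ∀ i, 0 ≤ S i) (n : ℕ) :
    ∑ j ∈ range n, ((j : ℝ) + 1) * S j ≤ n * ∑ j ∈ range n, S j := by
  rw [mul_sum]
  refine sum_le_sum fun j hj => mul_le_mul_of_nonneg_right ?_ (hS j)
  exact_mod_cast mem_range.mp hj

theorem sum_range_succ_eq_sum_add_weighted_sum (S St : ℕ → ℝ) (hSt0 : St 0 = S 0)
    (hSt : ∀ r, St (r + 1) = S (r + 1) + ((r : ℝ) + 1) * S r) (n : ℕ) :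
    ∑ i ∈ range (n + 1), St i = ∑ i ∈ range (n + 1), S i + ∑ j ∈ range n, ((j : ℝ) + 1) * S j := by
  simp only [sum_range_succ' St, sum_range_succ' S, hSt, hSt0, sum_add_distrib]
  ring

theorem stmt_14 (S St : ℕ → ℝ) (hS : ∀ r, 0 < S r)
    (hSt0 : St 0 = S 0)
    (hSt : ∀ r, St (r + 1) = S (r + 1) + ((r : ℝ) + 1) * S r)
    (h1 : Summable (fun r => (∑ i ∈ Finset.range (r + 1), S i) / S (r + 1)))
    (h2 : Summable (fun r : ℕ => ((r : ℝ) + 1) *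
      (∑ i ∈ Finset.range (r + 1), S i) / (((r : ℝ) + 2) * S (r + 1)))) :
    Summable (fun r => (∑ i ∈ Finset.range (r + 1), St i) / St (r + 1)) := by
  have hS' : ∀ r, 0 ≤ S r := fun r => (hS r).le
  have hSt_pos : ∀ r, 0 < St (r + 1) := fun r => by
    rw [hSt]; exact add_pos (hS _) (mul_pos (by positivity) (hS r))
  have hV : ∀ n, 0 ≤ ∑ i ∈ range n, S i := fun n => sum_nonneg fun i _ => hS' i
  have hW : ∀ n, 0 ≤ ∑ j ∈ range n, ((j : ℝ) + 1) * S j := fun n =>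
    sum_nonneg fun j _ => mul_nonneg (by positivity) (hS' j)
  rw [← summable_nat_add_iff 1]
  refine Summable.of_nonneg_of_le (fun r => ?_) (fun r => ?_)
    ((summable_nat_add_iff 1).mpr h1 |>.add h2)
  · rw [sum_range_succ_eq_sum_add_weighted_sum S St hSt0 hSt]
    exact div_nonneg (add_nonneg (hV _) (hW _)) (hSt_pos _).le
  · have hW_le := sum_range_weighted_le_mul_sum S hS' (r + 1)
    have hden : 0 < ((r : ℝ) + 2) * S (r + 1) := mul_pos (by positivity) (hS _)
    have hcast : ((r + 1 : ℕ) : ℝ) + 1 = r + 2 := by push_cast; ring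
    rw [sum_range_succ_eq_sum_add_weighted_sum S St hSt0 hSt, hSt, hcast]
    calc _ ≤ (∑ i ∈ range (r + 1 + 1), S i) / S (r + 1 + 1) +
          (∑ j ∈ range (r + 1), ((j : ℝ) + 1) * S j) / (((r : ℝ) + 2) * S (r + 1)) :=
          add_div_add_le_div_add_div (hV _) (hW _) (hS _) hden
      _ ≤ _ := by
          push_cast at hW_le
          gcongr
end
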